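/- arXiv:1107.4917 — 5 statements merged into one kernel-verified Lean document; each statement's English description precedes it below -/
import Mathlib

section
/- Let μ, q, g, γ ∈ ℝ with β := (μ − (1 − (1+q)²)²)/3 ≥ 0. Then the lowest-order Eckhaus coefficient of the model-2 stability determinant is A₂: lim_{k→0, k≠0} detJ₂(k, 0)/k² = 12β(3(1+q)² − 1) − 16q²(1+q)²(2+q)². -/
open Filter Topology

/-- The determinant of the model-2 stability matrix `J₂` as a function of the
perturbation wavevector `(k, l)`, with `β = (μ − (1 − (1+q)²)²)/3`. -/
noncomputable def detJ2 (μ q g γ : ℝ) (k l : ℝ) : ℝ :=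
  let β := (μ - (1 - (1 + q)^2)^2) / 3
  let M₁ := μ - (1 - ((1 + q + k)^2 + l^2))^2 - 6*β
  let M₂ := -3*β
  let M₃ := -l*(1 + q)*Real.sqrt β / (k^2 + l^2)
  let M₄ := μ - (1 - ((1 + q - k)^2 + l^2))^2 - 6*β
  let M₅ := Real.exp (-γ^2*(k^2 + l^2)) * l * (1 + q) * Real.sqrt β * (2*k*(1 + q) + k^2 + l^2)
  let M₆ := Real.exp (-γ^2*(k^2 + l^2)) * l * (1 + q) * Real.sqrt β * (2*k*(1 + q) - k^2 - l^2)
  (M₁ + g*M₃*M₅) * (M₄ - g*M₃*M₆) - (M₂ + g*M₃*M₆) * (M₂ - g*M₃*M₅)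

/-- `detJ2 μ q g γ k 0 / k²` as a polynomial in `k`, written with `a = 1 − (1+q)²`. -/
def eckhausQuotient (β q k : ℝ) : ℝ :=
  let a := 1 - (1 + q)^2
  (k^2 - 4*(1 + q)^2) * (4*a^2 - 4*a*k^2 + k^2*(k^2 - 4*(1 + q)^2))
    - 3*β*(4*a - 2*k^2 - 8*(1 + q)^2)

theorem continuous_eckhausQuotient (β q : ℝ) : Continuous (eckhausQuotient β q) := by
  unfold eckhausQuotient
  fun_prop

theorem eckhausQuotient_zero (β q : ℝ) :
    eckhausQuotient β q 0 = 12*β*(3*(1 + q)^2 - 1) - 16*q^2*(1 + q)^2*(2 + q)^2 := by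
  simp only [eckhausQuotient]
  ring

/- On the axis `l = 0` the coupling entry `M₃` vanishes, so `detJ₂ = M₁M₄ − M₂²`. Writing
`M₁ = s(2a − s) − 3β` and `M₄ = t(2a − t) − 3β` with `s, t = ±2k(1+q) + k²`, both `st` and
`s + t` are divisible by `k²`. -/
theorem detJ2_zero_right {μ q β : ℝ} (hβ : β = (μ - (1 - (1 + q)^2)^2) / 3) (g γ k : ℝ) :
    detJ2 μ q g γ k 0 = k^2 * eckhausQuotient β q k := by
  subst hβ
  simp only [detJ2, eckhausQuotient, neg_zero, zero_mul, zero_div, mul_zero, sub_zero,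
    add_zero]
  ring

theorem detJ2_eckhaus_coefficient_general (μ q g γ β : ℝ)
    (hβ : β = (μ - (1 - (1 + q)^2)^2) / 3) :
    Tendsto (fun k : ℝ => detJ2 μ q g γ k 0 / k^2) (𝓝[≠] 0)
      (𝓝 (12*β*(3*(1 + q)^2 - 1) - 16*q^2*(1 + q)^2*(2 + q)^2)) := by
  have hlim : Tendsto (eckhausQuotient β q) (𝓝[≠] 0)
      (𝓝 (12*β*(3*(1 + q)^2 - 1) - 16*q^2*(1 + q)^2*(2 + q)^2)) :=
    eckhausQuotient_zero β q ▸ (continuous_eckhausQuotient β q).continuousAt.tendsto.mono_left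
      nhdsWithin_le_nhds
  refine hlim.congr' ?_
  filter_upwards [self_mem_nhdsWithin] with k (hk : k ≠ 0)
  rw [detJ2_zero_right hβ, mul_div_cancel_left₀ _ (pow_ne_zero 2 hk)]

/-- The lowest-order Eckhaus coefficient of the model-2 stability determinant:
`lim_{k→0, k≠0} detJ₂(k,0)/k² = A₂ = 12β(3(1+q)²−1) − 16q²(1+q)²(2+q)²`. -/
theorem detJ2_eckhaus_coefficient (μ q g γ β : ℝ)
    (hβ : β = (μ - (1 - (1 + q)^2)^2) / 3) (hβ0 : 0 ≤ β) :
    Tendsto (fun k : ℝ => detJ2 μ q g γ k 0 / k^2) (𝓝[≠] 0)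
      (𝓝 (12*β*(3*(1 + q)^2 - 1) - 16*q^2*(1 + q)^2*(2 + q)^2)) :=
  detJ2_eckhaus_coefficient_general μ q g γ β hβ
end

section
/- Let μ, q, g, γ ∈ ℝ with β := (μ − (1 − (1+q)²)²)/3 ≥ 0. Then the lowest-order zigzag coefficient of the model-2 stability determinant is C₂: lim_{l→0, l≠0} detJ₂(0, l)/l² = 12β(βg(1+q)² + q(2+q)). -/
open Filter Topology

/-- The lowest-order zigzag coefficient of the model-2 stability determinant:
`lim_{l→0, l≠0} detJ₂(0,l)/l² = C₂ = 12β(βg(1+q)² + q(2+q))`. -/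
theorem detJ2_zigzag_coefficient (μ q g γ β : ℝ)
    (hβ : β = (μ - (1 - (1 + q)^2)^2) / 3) (hβ0 : 0 ≤ β) :
    Tendsto (fun l : ℝ => detJ2 μ q g γ 0 l / l^2) (𝓝[≠] 0)
      (𝓝 (12*β*(β*g*(1 + q)^2 + q*(2 + q)))) := by
  set f : ℝ → ℝ := fun l =>
    (-6*β + 2*(1 - (1+q)^2)*l^2 - l^4) *
      (2*(1 - (1+q)^2) - l^2 - 2*g*Real.exp (-γ^2*(0^2 + l^2))*(1+q)^2*β) with hf
  have hcont : Continuous f := by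
    unfold f
    continuity
  have hf0 : f 0 = 12*β*(β*g*(1 + q)^2 + q*(2 + q)) := by
    simp [hf]
    ring
  have hkey : ∀ l : ℝ, l ≠ 0 → detJ2 μ q g γ 0 l / l^2 = f l := by
    intro l hl
    have hl2 : l^2 ≠ 0 := pow_ne_zero 2 hl
    have hs : Real.sqrt β * Real.sqrt β = β := Real.mul_self_sqrt hβ0
    have hμ : μ = 3*β + (1 - (1+q)^2)^2 := by rw [hβ]; ring
    unfold detJ2
    simp only [← hβ]
    rw [div_eq_iff hl2]
    unfold f
    rw [hμ]
    field_simp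
    ring_nf
    rw [Real.sq_sqrt hβ0]
    ring
  have : Tendsto f (𝓝[≠] (0:ℝ)) (𝓝 (f 0)) :=
    (hcont.tendsto 0).mono_left nhdsWithin_le_nhds
  rw [hf0] at this
  refine this.congr' ?_
  filter_upwards [self_mem_nhdsWithin] with l hl
  exact (hkey l hl).symm
end

section
/- Let μ, q, g, γ ∈ ℝ with β := (μ − (1 − (1+q)²)²)/3 ≥ 0. Along the diagonal k = l = t, the model-2 stability determinant satisfies lim_{t→0, t≠0} 2·detJ₂(t, t)/t² = A₂ + B₂ + C₂, where A₂ = 12β(3(1+q)² − 1) − 16q²(1+q)²(2+q)², B₂ = −24β(1 − 2(1+q)²) − 16q²(1+q)²(2+q)² + 4(1+q)²β(3β − 4q(1+q)²(2+q))g, and C₂ = 12β(βg(1+q)² + q(2+q)). -/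
open Filter Topology

/-- Along the diagonal `k = l = t`, the model-2 stability determinant satisfies
`lim_{t→0, t≠0} 2·detJ₂(t,t)/t² = A₂ + B₂ + C₂`. -/
theorem detJ2_diagonal_coefficient (μ q g γ β : ℝ)
    (hβ : β = (μ - (1 - (1 + q)^2)^2) / 3) (hβ0 : 0 ≤ β)
    (A₂ B₂ C₂ : ℝ)
    (hA : A₂ = 12*β*(3*(1 + q)^2 - 1) - 16*q^2*(1 + q)^2*(2 + q)^2)
    (hB : B₂ = -24*β*(1 - 2*(1 + q)^2) - 16*q^2*(1 + q)^2*(2 + q)^2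
               + 4*(1 + q)^2*β*(3*β - 4*q*(1 + q)^2*(2 + q))*g)
    (hC : C₂ = 12*β*(β*g*(1 + q)^2 + q*(2 + q))) :
    Tendsto (fun t : ℝ => 2 * detJ2 μ q g γ t t / t^2) (𝓝[≠] 0)
      (𝓝 (A₂ + B₂ + C₂)) := by
  have harg : (μ - (1 - (1 + q)^2)^2)/3 = β := by rw [hβ]
  have hμ : μ = 3*β + (1 - (1 + q)^2)^2 := by rw [hβ]; ring
  have hs2 : Real.sqrt β ^ 2 = β := Real.sq_sqrt hβ0
  have hs4 : Real.sqrt β ^ 4 = β ^ 2 := by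
    rw [show (4:ℕ) = 2*2 from rfl, pow_mul, hs2]
  set f : ℝ → ℝ := fun t =>
    2 * (-24*β*(1 - 2*(1 + q)^2 - t^2)
      + 16*(t^2 - (1 + q)^2)*(((1 - (1 + q)^2) - t^2)^2 - (1 + q)^2*t^2)
      + g * Real.exp (-γ^2*(t^2 + t^2)) * (1 + q)^2 * β
        * (12*β + 8*(1 + q)^2*((1 - (1 + q)^2) - 2*t^2)
           - 8*t^2*(1 - 2*(1 + q)^2 - t^2))) with hf
  have hcont : Continuous f := by
    apply Continuous.mul continuous_const
    fun_prop
  have hf0 : f 0 = A₂ + B₂ + C₂ := by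
    have h1 : Real.exp (-γ^2*((0:ℝ)^2 + 0^2)) = 1 := by norm_num
    simp only [hf, h1, hA, hB, hC]
    ring
  have hlim : Tendsto f (𝓝[≠] (0:ℝ)) (𝓝 (A₂ + B₂ + C₂)) := by
    rw [← hf0]
    exact (hcont.tendsto 0).mono_left nhdsWithin_le_nhds
  refine hlim.congr' ?_
  filter_upwards [self_mem_nhdsWithin] with t ht
  have htne : t ≠ 0 := ht
  have ht2 : t^2 + t^2 ≠ 0 := by positivity
  simp only [detJ2, hf]
  rw [harg, hμ]
  field_simp
  ring_nf
  rw [hs2]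
  ring
end

section
/- Let μ, q, g ∈ ℝ with q ≠ 0, q ≠ −2, 1+q ≠ 0, 3(1+q)² ≠ 1, and β := (μ − (1 − (1+q)²)²)/3 ≠ 0. If A₂ = 0 and C₂ = 0 (the Eckhaus and zigzag boundaries cross), where A₂ := 12β(3(1+q)² − 1) − 16q²(1+q)²(2+q)² and C₂ := 12β(βg(1+q)² + q(2+q)), then 4gq(1+q)⁴(2+q) = −3(3(1+q)² − 1); equivalently g = 3(3(1+q)² − 1)/(−4q(1+q)⁴(2+q)), which is positive for small q < 0. -/
/-! With `β ≠ 0`, the zigzag condition reads `β g (1+q)² = -q(2+q)`. Multiplying it by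
`12(3(1+q)² - 1)` and substituting the Eckhaus condition `12β(3(1+q)² - 1) = 16q²(1+q)²(2+q)²`
eliminates `β`; what remains is the claimed identity multiplied by `4q(2+q)`. -/

theorem coupling_mul_eq_of_eckhaus_of_zigzag {K : Type*} [Field K] [CharZero K] {β q g : K}
    (hq0 : q ≠ 0) (hq2 : 2 + q ≠ 0)
    (hA : 12*β*(3*(1 + q)^2 - 1) = 16*q^2*(1 + q)^2*(2 + q)^2)
    (hC : β*g*(1 + q)^2 + q*(2 + q) = 0) :
    4*g*q*(1 + q)^4*(2 + q) = -3*(3*(1 + q)^2 - 1) := by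
  have hcancel : 4*q*(2 + q) ≠ 0 := by simp [hq0, hq2]
  apply mul_left_cancel₀ hcancel
  linear_combination (12*(3*(1 + q)^2 - 1))*hC - g*(1 + q)^2*hA

theorem eckhaus_zigzag_crossing_general (q g β A₂ C₂ : ℝ)
    (hq0 : q ≠ 0) (hq2 : q ≠ -2) (hq1 : 1 + q ≠ 0)
    (hβne : β ≠ 0)
    (hA : A₂ = 12*β*(3*(1 + q)^2 - 1) - 16*q^2*(1 + q)^2*(2 + q)^2)
    (hC : C₂ = 12*β*(β*g*(1 + q)^2 + q*(2 + q)))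
    (hA0 : A₂ = 0) (hC0 : C₂ = 0) :
    4*g*q*(1 + q)^4*(2 + q) = -3*(3*(1 + q)^2 - 1) ∧
    g = 3*(3*(1 + q)^2 - 1) / (-4*q*(1 + q)^4*(2 + q)) := by
  have hq2' : 2 + q ≠ 0 := fun h => hq2 (by linear_combination h)
  have hzigzag : β*g*(1 + q)^2 + q*(2 + q) = 0 := by
    rw [hC] at hC0
    exact (mul_eq_zero.mp hC0).resolve_left (mul_ne_zero (by norm_num) hβne)
  have key := coupling_mul_eq_of_eckhaus_of_zigzag hq0 hq2' (by linear_combination hA0 - hA) hzigzag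
  exact ⟨key, eq_div_of_mul_eq (by simp [hq0, hq1, hq2']) (by linear_combination -key)⟩

/-- Where the Eckhaus boundary (`A₂ = 0`) and the zigzag boundary (`C₂ = 0`)
cross, the mean-flow coupling satisfies `4gq(1+q)⁴(2+q) = −3(3(1+q)²−1)`,
i.e. `g = 3(3(1+q)²−1)/(−4q(1+q)⁴(2+q))`. -/
theorem eckhaus_zigzag_crossing (μ q g β A₂ C₂ : ℝ)
    (hq0 : q ≠ 0) (hq2 : q ≠ -2) (hq1 : 1 + q ≠ 0) (hq3 : 3*(1 + q)^2 ≠ 1)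
    (hβ : β = (μ - (1 - (1 + q)^2)^2) / 3) (hβne : β ≠ 0)
    (hA : A₂ = 12*β*(3*(1 + q)^2 - 1) - 16*q^2*(1 + q)^2*(2 + q)^2)
    (hC : C₂ = 12*β*(β*g*(1 + q)^2 + q*(2 + q)))
    (hA0 : A₂ = 0) (hC0 : C₂ = 0) :
    4*g*q*(1 + q)^4*(2 + q) = -3*(3*(1 + q)^2 - 1) ∧
    g = 3*(3*(1 + q)^2 - 1) / (-4*q*(1 + q)^4*(2 + q)) :=
  eckhaus_zigzag_crossing_general q g β A₂ C₂ hq0 hq2 hq1 hβne hA hC hA0 hC0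
end

section
/- Let μ, q, g ∈ ℝ with q ≠ 0, q ≠ −2, 1+q ≠ 0, 3(1+q)² ≠ 1, and β := (μ − (1 − (1+q)²)²)/3 ≠ 0. If A₂ = 0 and B₂ = 0 (the skew-varicose boundary B₂² = 4A₂C₂ meets the Eckhaus boundary A₂ = 0), where A₂ := 12β(3(1+q)² − 1) − 16q²(1+q)²(2+q)² and B₂ := −24β(1 − 2(1+q)²) − 16q²(1+q)²(2+q)² + 4(1+q)²β(3β − 4q(1+q)²(2+q))g, then g = (3/8)·(3(1+q)² − 1)/(1+q)⁶. In particular this crossing value tends to g_critical = 3/4 as q → 0. -/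
open Filter Topology

/-- Where the case-I skew-varicose boundary meets the Eckhaus boundary
(`A₂ = 0` and `B₂ = 0`), the mean-flow coupling is
`g = (3/8)(3(1+q)²−1)/(1+q)⁶`; this crossing value tends to
`g_critical = 3/4` as `q → 0`. -/
theorem sv_eckhaus_crossing (μ q g β A₂ B₂ : ℝ)
    (hq0 : q ≠ 0) (hq2 : q ≠ -2) (hq1 : 1 + q ≠ 0) (hq3 : 3*(1 + q)^2 ≠ 1)
    (hβ : β = (μ - (1 - (1 + q)^2)^2) / 3) (hβne : β ≠ 0)
    (hA : A₂ = 12*β*(3*(1 + q)^2 - 1) - 16*q^2*(1 + q)^2*(2 + q)^2)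
    (hB : B₂ = -24*β*(1 - 2*(1 + q)^2) - 16*q^2*(1 + q)^2*(2 + q)^2
               + 4*(1 + q)^2*β*(3*β - 4*q*(1 + q)^2*(2 + q))*g)
    (hA0 : A₂ = 0) (hB0 : B₂ = 0) :
    g = (3/8) * (3*(1 + q)^2 - 1) / (1 + q)^6 ∧
    Tendsto (fun q' : ℝ => (3/8) * (3*(1 + q')^2 - 1) / (1 + q')^6) (𝓝 0) (𝓝 (3/4)) := by
  have hq2' : 2 + q ≠ 0 := fun h => hq2 (by linarith)
  rw [hA] at hA0
  rw [hB] at hB0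
  have e1 : β * (3*(3*(1 + q)^2 - 1)) = 4*q^2*(1 + q)^2*(2 + q)^2 := by
    linear_combination hA0 / 4
  have e2 : (3*β - 4*q*(1 + q)^2*(2 + q)) * (3*(1 + q)^2 - 1)
      = -8*q*(1 + q)^4*(2 + q) := by
    linear_combination e1
  have e3 : (q^3*(1 + q)^2*(2 + q)^3) * (16*((1 + q)^6*(8*g)))
      = (q^3*(1 + q)^2*(2 + q)^3) * (16*(3*(3*(1 + q)^2 - 1))) := by
    linear_combination (-3*(3*(1 + q)^2 - 1)^2) * hB0
      + (12*(1 + q)^2*β*g*(3*(1 + q)^2 - 1)) * e2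
      + (-32*q*(1 + q)^6*(2 + q)*g - 24*(3*(1 + q)^2 - 1)*(1 - 2*(1 + q)^2)) * e1
  have hK : (q^3*(1 + q)^2*(2 + q)^3) * 16 ≠ 0 := by
    simp [hq0, hq1, hq2', pow_eq_zero_iff]
  have e4 : (1 + q)^6*(8*g) = 3*(3*(1 + q)^2 - 1) := by
    have := mul_left_cancel₀ hK (by linear_combination e3 :
      ((q^3*(1 + q)^2*(2 + q)^3) * 16) * ((1 + q)^6*(8*g))
        = ((q^3*(1 + q)^2*(2 + q)^3) * 16) * (3*(3*(1 + q)^2 - 1)))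
    exact this
  constructor
  · field_simp
    linear_combination e4
  · have hc : ContinuousAt (fun q' : ℝ => (3/8) * (3*(1 + q')^2 - 1) / (1 + q')^6) 0 :=
      ContinuousAt.div (by fun_prop) (by fun_prop) (by norm_num)
    have := hc.tendsto
    norm_num at this
    exact this
end
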